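/- arXiv:0901.1378 — 2 statements merged into one kernel-verified Lean document; each statement's English description precedes it below -/
import Mathlib

section
/- Lipschitz continuity of the covariance function (Lemma 4.10). Under the compact setting, Assumption (A1'), the Lipschitz condition on the Poisson solution, and with E Lipschitz and f : X → ℝ Lipschitz with π(f) = 0, there exists a finite constant c₀ such that |Γ(x₁, x) − Γ(x, x)| ≤ c₀ |x₁ − x| for all x, x₁ ∈ X (|·| the Euclidean norm on ℝ^d). -/
open MeasureTheory Filter
open scoped ENNReal NNReal

noncomputable section

variable {𝒳 : Type*} [MeasurableSpace 𝒳]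

/-- Equi-energy swap acceptance probability. -/
def accept (τ : ℝ) (E : 𝒳 → ℝ) (y x : 𝒳) : ℝ :=
  min 1 (Real.exp (-τ * E y) / Real.exp (-τ * E x))

/-- The equi-energy swap kernel `T(y, x, ·)`. -/
def swapK (τ : ℝ) (E : 𝒳 → ℝ) (y x : 𝒳) : Measure 𝒳 :=
  ENNReal.ofReal (accept τ E y x) • Measure.dirac y
    + ENNReal.ofReal (1 - accept τ E y x) • Measure.dirac x

/-- The adaptive kernel `P_μ = θ P + (1-θ) ∫ μ(dy) T(y, ·, ·)`. -/
def adaptK (θ τ : ℝ) (E : 𝒳 → ℝ) (P : 𝒳 → Measure 𝒳) (μ : Measure 𝒳) (x : 𝒳) :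
    Measure 𝒳 :=
  ENNReal.ofReal θ • P x + ENNReal.ofReal (1 - θ) • μ.bind (fun y => swapK τ E y x)

/-- Iterates of a kernel. -/
def iterK (P : 𝒳 → Measure 𝒳) : ℕ → 𝒳 → Measure 𝒳
  | 0 => fun x => Measure.dirac x
  | n + 1 => fun x => (iterK P n x).bind P

/-- `W`-norm distance between measures. -/
def vdist (W : 𝒳 → ℝ) (μ ν : Measure 𝒳) : ℝ≥0∞ :=
  ⨆ g ∈ {g : 𝒳 → ℝ | Measurable g ∧ ∀ x, |g x| ≤ W x},
    ENNReal.ofReal |∫ x, g x ∂μ - ∫ x, g x ∂ν|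

/-- Empirical measure of the auxiliary process. -/
def empMeas {Ω : Type*} (Xp : ℕ → Ω → 𝒳) (μ0 : Measure 𝒳) (n : ℕ) (ω : Ω) : Measure 𝒳 :=
  if n = 0 then μ0 else ((n : ℝ≥0∞))⁻¹ • ∑ k ∈ Finset.Icc 1 n, Measure.dirac (Xp k ω)

/-!
Since `T(y, x, ·) = a(y, x) δ_y + (1 - a(y, x)) δ_x` with acceptance probability
`a(y, x) = min 1 (r(y)/r(x))`, one has `∫ U dT(y, x, ·) = a(y, x) U(y) + (1 - a(y, x)) U(x)`.
On the compact state space `U` (Lipschitz by the Poisson condition) and `E` are bounded, so `a`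
and hence `H_x(y)` are Lipschitz in `x` uniformly in `y`, bounded, and `π'`-centred.

By (A1') the measure `(P⁰)^{n₀}(x, ·) - ε₀ φ₀` has mass `1 - ε₀` for every `x`, so
`(P⁰)^{n₀}` contracts oscillations by `1 - ε₀`; for `π'`-centred `h` this gives
`|(P⁰)^j h| ≤ 2 ‖h‖∞ (1 - ε₀)^⌊j/n₀⌋`. Summing over `j`, `U⁰_x` is bounded, and being linear in
`H_x` it is Lipschitz in `x`. Finally `Γ(x₁, x) - Γ(x, x)` is linear in `U⁰_{x₁} - U⁰_x`.
-/

open Set ProbabilityTheory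

section BoundedIntegrals

variable {α β : Type*} [MeasurableSpace α] [MeasurableSpace β] {μ : Measure α} {g : α → ℝ}
  {M : ℝ}

lemma integrable_of_abs_le [IsFiniteMeasure μ] (hg : Measurable g) (hM : ∀ x, |g x| ≤ M) :
    Integrable g μ :=
  .of_bound hg.aestronglyMeasurable M (ae_of_all _ fun x => (Real.norm_eq_abs _).trans_le (hM x))

lemma abs_integral_le_of_abs_le [IsProbabilityMeasure μ] (hM : ∀ x, |g x| ≤ M) :
    |∫ x, g x ∂μ| ≤ M := by
  simpa using norm_integral_le_of_norm_le_const (μ := μ)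
    (ae_of_all _ fun x => (Real.norm_eq_abs _).trans_le (hM x))

lemma measurable_integral_of_measurable {κ : α → Measure β} (hκ : Measurable κ) {g : β → ℝ}
    (hg : Measurable g) : Measurable fun x => ∫ y, g y ∂κ x :=
  (hg.stronglyMeasurable.integral_kernel (κ := ⟨κ, hκ⟩)).measurable

lemma isProbabilityMeasure_bind [IsProbabilityMeasure μ] {κ : α → Measure β} (hκ : Measurable κ)
    [∀ x, IsProbabilityMeasure (κ x)] : IsProbabilityMeasure (μ.bind κ) :=
  have : IsMarkovKernel (⟨κ, hκ⟩ : Kernel α β) :=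
    ⟨fun x => inferInstanceAs (IsProbabilityMeasure (κ x))⟩
  inferInstanceAs (IsProbabilityMeasure ((⟨κ, hκ⟩ : Kernel α β) ∘ₘ μ))

lemma integral_bind {κ : α → Measure β} (hκ : Measurable κ) {g : β → ℝ}
    (hg : Integrable g (μ.bind κ)) : ∫ y, g y ∂μ.bind κ = ∫ x, ∫ y, g y ∂κ x ∂μ := by
  set η : Kernel α β := ⟨κ, hκ⟩
  change Integrable g (η ∘ₘ μ) at hg
  change ∫ y, g y ∂(η ∘ₘ μ) = _
  rw [Measure.comp_eq_comp_const_apply] at hg ⊢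
  rw [Kernel.integral_comp hg]
  rfl

end BoundedIntegrals

section Iterates

variable {α : Type*} [MeasurableSpace α] {P : α → Measure α}

lemma measurable_iterK (hP : Measurable P) (n : ℕ) : Measurable (iterK P n) := by
  induction n with
  | zero => exact Measure.measurable_dirac
  | succ n ih => exact (Measure.measurable_bind' hP).comp ih

lemma isProbabilityMeasure_iterK (hP : Measurable P) [∀ x, IsProbabilityMeasure (P x)] (n : ℕ)
    (x : α) : IsProbabilityMeasure (iterK P n x) := by
  induction n with
  | zero => exact Measure.dirac.isProbabilityMeasure
  | succ n ih => exact isProbabilityMeasure_bind hP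

lemma iterK_add (hP : Measurable P) (m n : ℕ) (x : α) :
    iterK P (m + n) x = (iterK P m x).bind (iterK P n) := by
  induction n with
  | zero => exact Measure.bind_dirac.symm
  | succ n ih =>
    change (iterK P (m + n) x).bind P = _
    rw [ih, Measure.bind_bind (measurable_iterK hP n).aemeasurable hP.aemeasurable]
    rfl

lemma bind_iterK_of_bind_eq (hP : Measurable P) {π : Measure α} (hπ : π.bind P = π) (n : ℕ) :
    π.bind (iterK P n) = π := by
  induction n with
  | zero => exact Measure.bind_dirac
  | succ n ih =>
    change π.bind (fun x => (iterK P n x).bind P) = π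
    rw [← Measure.bind_bind (measurable_iterK hP n).aemeasurable hP.aemeasurable, ih, hπ]

variable [∀ x, IsProbabilityMeasure (P x)] {g : α → ℝ} {M : ℝ}

lemma integral_iterK_add (hP : Measurable P) (hg : Measurable g) (hM : ∀ x, |g x| ≤ M)
    (m n : ℕ) (x : α) :
    ∫ z, g z ∂iterK P (m + n) x = ∫ y, ∫ z, g z ∂iterK P n y ∂iterK P m x := by
  have := isProbabilityMeasure_iterK hP
  have := isProbabilityMeasure_bind (μ := iterK P m x) (measurable_iterK hP n)
  rw [iterK_add hP, integral_bind (measurable_iterK hP n) (integrable_of_abs_le hg hM)]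

lemma integral_integral_iterK_of_bind_eq (hP : Measurable P) (hg : Measurable g)
    (hM : ∀ x, |g x| ≤ M) {π : Measure α} [IsProbabilityMeasure π] (hπ : π.bind P = π)
    (n : ℕ) : ∫ x, ∫ z, g z ∂iterK P n x ∂π = ∫ z, g z ∂π := by
  have := isProbabilityMeasure_iterK hP
  have hint : Integrable g (π.bind (iterK P n)) := by
    rw [bind_iterK_of_bind_eq hP hπ]
    exact integrable_of_abs_le hg hM
  rw [← integral_bind (measurable_iterK hP n) hint, bind_iterK_of_bind_eq hP hπ]

end Iterates

section Doeblin

variable {α : Type*} [MeasurableSpace α]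

lemma integral_mem_Icc_of_smul_le {μ φ : Measure α} [IsProbabilityMeasure μ]
    [IsProbabilityMeasure φ] {ε : ℝ} (hε : 0 ≤ ε) (hle : ENNReal.ofReal ε • φ ≤ μ)
    {h : α → ℝ} (hh : Measurable h) {a c : ℝ} (hac : ∀ z, h z ∈ Icc a (a + c)) :
    ∫ z, h z ∂μ ∈ Icc ((1 - ε) * a + ε * ∫ z, h z ∂φ)
      ((1 - ε) * a + ε * ∫ z, h z ∂φ + (1 - ε) * c) := by
  have : IsFiniteMeasure (ENNReal.ofReal ε • φ) := ⟨by simp⟩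
  set ν := μ - ENNReal.ofReal ε • φ
  have hε1 : ENNReal.ofReal ε ≤ 1 := by
    simpa using Measure.le_iff'.1 hle univ
  have hν : ν.real univ = 1 - ε := by
    rw [measureReal_def, Measure.sub_apply MeasurableSet.univ hle]
    simp [ENNReal.toReal_sub_of_le hε1 ENNReal.one_ne_top, hε]
  have hbound z : |h z| ≤ max |a| |a + c| := abs_le_max_abs_abs (hac z).1 (hac z).2
  have hφ : Integrable h φ := integrable_of_abs_le hh hbound
  have hint : Integrable h ν := integrable_of_abs_le hh hbound
  have hsplit : ∫ z, h z ∂μ = ∫ z, h z ∂ν + ε * ∫ z, h z ∂φ := by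
    conv_lhs => rw [← Measure.sub_add_cancel_of_le hle]
    rw [integral_add_measure hint (hφ.smul_measure ENNReal.ofReal_ne_top), integral_smul_measure,
      ENNReal.toReal_ofReal hε, smul_eq_mul]
  have hlow : ν.real univ * a ≤ ∫ z, h z ∂ν := by
    simpa using integral_mono (integrable_const a) hint fun z => (hac z).1
  have hup : ∫ z, h z ∂ν ≤ ν.real univ * (a + c) := by
    simpa using integral_mono hint (integrable_const (a + c)) fun z => (hac z).2
  rw [hν] at hlow hup
  rw [hsplit]
  constructor <;> linarith

lemma abs_le_of_mem_Icc_of_integral_eq_zero {μ : Measure α} [IsProbabilityMeasure μ]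
    {h : α → ℝ} (hint : Integrable h μ) (h0 : ∫ z, h z ∂μ = 0) {a c : ℝ}
    (hac : ∀ z, h z ∈ Icc a (a + c)) (z : α) : |h z| ≤ c := by
  have hlow : a ≤ 0 := by
    simpa [h0] using integral_mono (integrable_const a) hint fun z => (hac z).1
  have hup : 0 ≤ a + c := by
    simpa [h0] using integral_mono hint (integrable_const (a + c)) fun z => (hac z).2
  exact abs_le.2 ⟨by linarith [(hac z).1], by linarith [(hac z).2]⟩

variable {P : α → Measure α} [∀ x, IsProbabilityMeasure (P x)]
  {n₀ : ℕ} {ε : ℝ} {φ : Measure α} [IsProbabilityMeasure φ]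

lemma exists_forall_integral_iterK_mem_Icc (hP : Measurable P) (hε : 0 ≤ ε)
    (hmin : ∀ x, ENNReal.ofReal ε • φ ≤ iterK P n₀ x) {g : α → ℝ} (hg : Measurable g) {M : ℝ}
    (hM : ∀ x, |g x| ≤ M) (q : ℕ) {j : ℕ} (hj : n₀ * q ≤ j) :
    ∃ a, ∀ x, ∫ z, g z ∂iterK P j x ∈ Icc a (a + (1 - ε) ^ q * (2 * M)) := by
  have := isProbabilityMeasure_iterK hP
  induction q generalizing j with
  | zero =>
    refine ⟨-M, fun x => ?_⟩
    have := abs_le.1 (abs_integral_le_of_abs_le (μ := iterK P j x) hM)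
    constructor <;> linarith
  | succ q ih =>
    obtain ⟨k, rfl⟩ : ∃ k, j = n₀ + k := ⟨j - n₀, by rw [mul_add] at hj; omega⟩
    obtain ⟨a, ha⟩ := ih (j := k) (by rw [mul_add] at hj; omega)
    refine ⟨(1 - ε) * a + ε * ∫ y, ∫ z, g z ∂iterK P k y ∂φ, fun x => ?_⟩
    rw [integral_iterK_add hP hg hM, pow_succ', mul_assoc]
    exact integral_mem_Icc_of_smul_le hε (hmin x) (measurable_integral_of_measurable
      (measurable_iterK hP k) hg) ha

theorem abs_integral_iterK_le_of_minorization (hP : Measurable P) {π : Measure α}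
    [IsProbabilityMeasure π] (hπ : π.bind P = π) (hε : 0 ≤ ε)
    (hmin : ∀ x, ENNReal.ofReal ε • φ ≤ iterK P n₀ x) {g : α → ℝ} (hg : Measurable g) {M : ℝ}
    (hM : ∀ x, |g x| ≤ M) (hg0 : ∫ z, g z ∂π = 0) (j : ℕ) (x : α) :
    |∫ z, g z ∂iterK P j x| ≤ (1 - ε) ^ (j / n₀) * (2 * M) := by
  have := isProbabilityMeasure_iterK hP
  obtain ⟨a, ha⟩ := exists_forall_integral_iterK_mem_Icc hP hε hmin hg hM (j / n₀)
    (Nat.mul_div_le j n₀)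
  refine abs_le_of_mem_Icc_of_integral_eq_zero (μ := π) ?_ ?_ ha x
  · exact integrable_of_abs_le (measurable_integral_of_measurable (measurable_iterK hP j) hg)
      fun y => abs_integral_le_of_abs_le hM
  · rw [integral_integral_iterK_of_bind_eq hP hg hM hπ, hg0]

end Doeblin

section PoissonSum

variable {α : Type*} [MeasurableSpace α] {P : α → Measure α}

lemma summable_pow_div {ρ : ℝ} (hρ₀ : 0 ≤ ρ) (hρ₁ : ρ < 1) (n : ℕ) [NeZero n] :
    Summable fun j : ℕ => ρ ^ (j / n) := by
  have : Summable fun p : ℕ × Fin n => ρ ^ p.1 * 1 :=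
    (summable_geometric_of_lt_one hρ₀ hρ₁).mul_of_nonneg (summable_of_hasFiniteSupport
      (toFinite _)) (fun _ => by positivity) fun _ => zero_le_one
  exact ((Nat.divModEquiv n).summable_iff.2 this).congr fun j => by simp

def poissonSum (P : α → Measure α) (g : α → ℝ) (x : α) : ℝ :=
  ∑' j : ℕ, ∫ z, g z ∂iterK P j x

lemma measurable_poissonSum (hP : Measurable P) {g : α → ℝ} (hg : Measurable g)
    (hsum : ∀ x, Summable fun j => ∫ z, g z ∂iterK P j x) : Measurable (poissonSum P g) :=
  measurable_of_tendsto_metrizable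
    (fun _ => Finset.measurable_sum _ fun j _ =>
      measurable_integral_of_measurable (measurable_iterK hP j) hg)
    (tendsto_pi_nhds.2 fun x => (hsum x).hasSum.tendsto_sum_nat)

lemma poissonSum_sub {g₁ g₂ : α → ℝ} {x : α} (hg₁ : ∀ j, Integrable g₁ (iterK P j x))
    (hg₂ : ∀ j, Integrable g₂ (iterK P j x)) (hs₁ : Summable fun j => ∫ z, g₁ z ∂iterK P j x)
    (hs₂ : Summable fun j => ∫ z, g₂ z ∂iterK P j x) :
    poissonSum P (fun z => g₁ z - g₂ z) x = poissonSum P g₁ x - poissonSum P g₂ x := by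
  rw [poissonSum, poissonSum, poissonSum, ← hs₁.tsum_sub hs₂]
  exact tsum_congr fun j => integral_sub (hg₁ j) (hg₂ j)

theorem exists_abs_poissonSum_le [∀ x, IsProbabilityMeasure (P x)] (hP : Measurable P)
    {π : Measure α} [IsProbabilityMeasure π] (hπ : π.bind P = π) {n₀ : ℕ} (hn₀ : 1 ≤ n₀)
    {ε : ℝ} (hε : ε ∈ Ioc 0 1) {φ : Measure α} [IsProbabilityMeasure φ] (hmin : ∀ x, ENNReal.ofReal ε • φ ≤ iterK P n₀ x) :
    ∃ C, ∀ {g : α → ℝ} {M : ℝ}, Measurable g → (∀ x, |g x| ≤ M) → ∫ z, g z ∂π = 0 → ∀ x,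
      (Summable fun j => ∫ z, g z ∂iterK P j x) ∧ |poissonSum P g x| ≤ C * M := by
  have : NeZero n₀ := ⟨by omega⟩
  have hρ := summable_pow_div (sub_nonneg.2 hε.2) (by linarith [hε.1]) n₀
  refine ⟨2 * ∑' j : ℕ, (1 - ε) ^ (j / n₀), fun {g M} hg hM hg0 x => ?_⟩
  have hbound (j : ℕ) := abs_integral_iterK_le_of_minorization hP hπ hε.1.le hmin hg hM hg0 j x
  refine ⟨.of_norm_bounded (hρ.mul_right _) hbound, ?_⟩
  calc |poissonSum P g x| ≤ ∑' j : ℕ, (1 - ε) ^ (j / n₀) * (2 * M) :=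
        tsum_of_norm_bounded (f := fun j => ∫ z, g z ∂iterK P j x) (hρ.mul_right _).hasSum hbound
    _ = _ := by rw [tsum_mul_right]; ring

end PoissonSum

def kernelCovariance {α : Type*} [MeasurableSpace α] (P : α → Measure α) (μ : Measure α)
    (u v : α → ℝ) : ℝ :=
  ∫ z, (u z * v z - (∫ w, u w ∂P z) * ∫ w, v w ∂P z) ∂μ

section Covariance

variable {α : Type*} [MeasurableSpace α] {P : α → Measure α} [∀ x, IsProbabilityMeasure (P x)]
  {μ : Measure α} [IsProbabilityMeasure μ]

lemma integrable_kernelCovariance_integrand (hP : Measurable P) {u v : α → ℝ} (hu : Measurable u)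
    (hv : Measurable v) {B : ℝ} (huB : ∀ z, |u z| ≤ B) (hvB : ∀ z, |v z| ≤ B) :
    Integrable (fun z => u z * v z - (∫ w, u w ∂P z) * ∫ w, v w ∂P z) μ := by
  refine integrable_of_abs_le ((hu.mul hv).sub ((measurable_integral_of_measurable hP hu).mul
    (measurable_integral_of_measurable hP hv))) (M := B * B + B * B) fun z => ?_
  have hPu := abs_integral_le_of_abs_le (μ := P z) huB
  have hPv := abs_integral_le_of_abs_le (μ := P z) hvB
  have hB : 0 ≤ B := (abs_nonneg _).trans (huB z)
  refine (abs_sub _ _).trans (add_le_add ?_ ?_) <;> rw [abs_mul]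
  · exact mul_le_mul (huB z) (hvB z) (abs_nonneg _) hB
  · exact mul_le_mul hPu hPv (abs_nonneg _) hB

theorem abs_kernelCovariance_sub_le (hP : Measurable P) {u₁ u v : α → ℝ} (hu₁ : Measurable u₁)
    (hu : Measurable u) (hv : Measurable v) {B D : ℝ} (hu₁B : ∀ z, |u₁ z| ≤ B)
    (huB : ∀ z, |u z| ≤ B) (hvB : ∀ z, |v z| ≤ B) (hD : ∀ z, |u₁ z - u z| ≤ D) :
    |kernelCovariance P μ u₁ v - kernelCovariance P μ u v| ≤ 2 * B * D := by
  rw [kernelCovariance, kernelCovariance, ← integral_sub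
    (integrable_kernelCovariance_integrand hP hu₁ hv hu₁B hvB)
    (integrable_kernelCovariance_integrand hP hu hv huB hvB)]
  refine abs_integral_le_of_abs_le fun z => ?_
  have hPD : |(∫ w, u₁ w ∂P z) - ∫ w, u w ∂P z| ≤ D := by
    rw [← integral_sub (integrable_of_abs_le hu₁ hu₁B) (integrable_of_abs_le hu huB)]
    exact abs_integral_le_of_abs_le hD
  have hPv := abs_integral_le_of_abs_le (μ := P z) hvB
  have hD₀ : 0 ≤ D := (abs_nonneg _).trans (hD z)
  calc |u₁ z * v z - (∫ w, u₁ w ∂P z) * (∫ w, v w ∂P z)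
        - (u z * v z - (∫ w, u w ∂P z) * ∫ w, v w ∂P z)|
      = |(u₁ z - u z) * v z - ((∫ w, u₁ w ∂P z) - ∫ w, u w ∂P z) * ∫ w, v w ∂P z| := by
        ring_nf
    _ ≤ D * B + D * B := by
        refine (abs_sub _ _).trans (add_le_add ?_ ?_) <;> rw [abs_mul]
        · exact mul_le_mul (hD z) (hvB z) (abs_nonneg _) hD₀
        · exact mul_le_mul hPD hPv (abs_nonneg _) hD₀
    _ = 2 * B * D := by ring

end Covariance

section PoissonCovariance

variable {α : Type*} [MeasurableSpace α] {P : α → Measure α} [∀ x, IsProbabilityMeasure (P x)]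
  {π : Measure α} [IsProbabilityMeasure π] {ι : Type*} [PseudoMetricSpace ι]

theorem exists_abs_kernelCovariance_poissonSum_sub_le (hP : Measurable P) (hπ : π.bind P = π)
    {n₀ : ℕ} (hn₀ : 1 ≤ n₀) {ε : ℝ} (hε : ε ∈ Ioc 0 1) {φ : Measure α} [IsProbabilityMeasure φ]
    (hmin : ∀ x, ENNReal.ofReal ε • φ ≤ iterK P n₀ x) {h : ι → α → ℝ}
    (hmeas : ∀ x, Measurable (h x)) {M L : ℝ} (hM : ∀ x z, |h x z| ≤ M)
    (h0 : ∀ x, ∫ z, h x z ∂π = 0) (hL : ∀ x₁ x z, |h x₁ z - h x z| ≤ L * dist x₁ x) :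
    ∃ c, ∀ x₁ x, |kernelCovariance P π (poissonSum P (h x₁)) (poissonSum P (h x))
      - kernelCovariance P π (poissonSum P (h x)) (poissonSum P (h x))| ≤ c * dist x₁ x := by
  have := isProbabilityMeasure_iterK hP
  obtain ⟨C, hC⟩ := exists_abs_poissonSum_le hP hπ hn₀ hε hmin
  have hsum x z := (hC (hmeas x) (hM x) (h0 x) z).1
  have hmeasU x := measurable_poissonSum hP (hmeas x) (hsum x)
  have hbound x z := (hC (hmeas x) (hM x) (h0 x) z).2
  have hlip x₁ x z : |poissonSum P (h x₁) z - poissonSum P (h x) z| ≤ C * L * dist x₁ x := by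
    have hint x j := integrable_of_abs_le (μ := iterK P j z) (hmeas x) (hM x)
    rw [← poissonSum_sub (hint x₁) (hint x) (hsum x₁ z) (hsum x z), mul_assoc]
    refine (hC (g := fun z => h x₁ z - h x z) ((hmeas x₁).sub (hmeas x)) (hL x₁ x) ?_ z).2
    rw [integral_sub (integrable_of_abs_le (hmeas x₁) (hM x₁))
      (integrable_of_abs_le (hmeas x) (hM x)), h0, h0, sub_self]
  refine ⟨2 * (C * M) * (C * L), fun x₁ x => ?_⟩
  rw [mul_assoc _ (C * L)]
  exact abs_kernelCovariance_sub_le hP (hmeasU x₁) (hmeasU x) (hmeasU x) (hbound x₁) (hbound x)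
    (hbound x) (hlip x₁ x)

theorem exists_abs_kernelCovariance_centered_poissonSum_sub_le (hP : Measurable P)
    (hπ : π.bind P = π) {n₀ : ℕ} (hn₀ : 1 ≤ n₀) {ε : ℝ} (hε : ε ∈ Ioc 0 1) {φ : Measure α}
    [IsProbabilityMeasure φ] (hmin : ∀ x, ENNReal.ofReal ε • φ ≤ iterK P n₀ x) {G : ι → α → ℝ}
    (hmeas : ∀ x, Measurable (G x)) {M L : ℝ} (hM : ∀ x z, |G x z| ≤ M)
    (hL : ∀ x₁ x z, |G x₁ z - G x z| ≤ L * dist x₁ x) :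
    let h : ι → α → ℝ := fun x z => G x z - ∫ y, G x y ∂π
    ∃ c, ∀ x₁ x, |kernelCovariance P π (poissonSum P (h x₁)) (poissonSum P (h x))
      - kernelCovariance P π (poissonSum P (h x)) (poissonSum P (h x))| ≤ c * dist x₁ x := by
  intro h
  have hint x := integrable_of_abs_le (μ := π) (hmeas x) (hM x)
  refine exists_abs_kernelCovariance_poissonSum_sub_le hP hπ hn₀ hε hmin
    (fun x => (hmeas x).sub measurable_const) (M := 2 * M) (L := 2 * L)
    (fun x z => (abs_sub _ _).trans
      (by linarith [hM x z, abs_integral_le_of_abs_le (μ := π) (hM x)]))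
    (fun x => by simpa only [average_eq_integral] using integral_sub_average π (G x))
    fun x₁ x z => ?_
  have hmean : |∫ y, G x₁ y ∂π - ∫ y, G x y ∂π| ≤ L * dist x₁ x := by
    rw [← integral_sub (hint x₁) (hint x)]
    exact abs_integral_le_of_abs_le (hL x₁ x)
  calc |h x₁ z - h x z| = |(G x₁ z - G x z) - (∫ y, G x₁ y ∂π - ∫ y, G x y ∂π)| := by
        congr 1; ring
    _ ≤ L * dist x₁ x + L * dist x₁ x := (abs_sub _ _).trans (add_le_add (hL x₁ x z) hmean)
    _ = 2 * L * dist x₁ x := by ring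

end PoissonCovariance

section Swap

lemma accept_nonneg {α : Type*} (τ : ℝ) (E : α → ℝ) (y x : α) : 0 ≤ accept τ E y x :=
  le_min zero_le_one (by positivity)

lemma accept_le_one {α : Type*} (τ : ℝ) (E : α → ℝ) (y x : α) : accept τ E y x ≤ 1 :=
  min_le_left _ _

variable {α : Type*} [MeasurableSpace α] {τ : ℝ} {E : α → ℝ}

lemma measurable_accept_left (hE : Measurable E) (x : α) : Measurable fun y => accept τ E y x := by
  unfold accept; fun_prop

lemma integral_swapK {g : α → ℝ} (hg : Measurable g) (y x : α) :
    ∫ z, g z ∂swapK τ E y x = accept τ E y x * g y + (1 - accept τ E y x) * g x := by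
  have h₀ := accept_nonneg τ E y x
  have h₁ := accept_le_one τ E y x
  have hdirac (a : α) : Integrable g (Measure.dirac a) :=
    integrable_dirac' hg.stronglyMeasurable enorm_lt_top
  rw [swapK, integral_add_measure ((hdirac y).smul_measure ENNReal.ofReal_ne_top)
    ((hdirac x).smul_measure ENNReal.ofReal_ne_top), integral_smul_measure, integral_smul_measure,
    integral_dirac' _ _ hg.stronglyMeasurable, integral_dirac' _ _ hg.stronglyMeasurable,
    ENNReal.toReal_ofReal h₀, ENNReal.toReal_ofReal (by linarith), smul_eq_mul, smul_eq_mul]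

lemma measurable_integral_swapK {g : α → ℝ} (hg : Measurable g) (hE : Measurable E) (x : α) :
    Measurable fun y => ∫ z, g z ∂swapK τ E y x := by
  simp_rw [integral_swapK hg]
  exact ((measurable_accept_left hE x).mul hg).add
    ((measurable_const.sub (measurable_accept_left hE x)).mul measurable_const)

lemma abs_integral_swapK_le {g : α → ℝ} (hg : Measurable g) {M : ℝ} (hM : ∀ z, |g z| ≤ M)
    (y x : α) : |∫ z, g z ∂swapK τ E y x| ≤ M := by
  have h₀ := accept_nonneg τ E y x
  have h₁ := accept_le_one τ E y x
  have hy := abs_le.1 (hM y)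
  have hx := abs_le.1 (hM x)
  rw [integral_swapK hg, abs_le]
  constructor <;> nlinarith

end Swap

lemma abs_exp_sub_exp_le {a b C : ℝ} (ha : a ≤ C) (hb : b ≤ C) :
    |Real.exp a - Real.exp b| ≤ Real.exp C * |a - b| :=
  (convex_Iic C).norm_image_sub_le_of_norm_deriv_le (fun _ _ => Real.differentiableAt_exp)
    (fun z hz => by simpa using hz) hb ha

section SwapLipschitz

variable {α : Type*} [PseudoMetricSpace α] {τ : ℝ} {E : α → ℝ}

lemma abs_accept_sub_accept_le {K : ℝ≥0} (hE : LipschitzWith K E) {B : ℝ}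
    (hB : ∀ z, |E z| ≤ B) (y x₁ x : α) :
    |accept τ E y x₁ - accept τ E y x| ≤ Real.exp (2 * |τ| * B) * |τ| * K * dist x₁ x := by
  have hexp (x : α) : accept τ E y x = min 1 (Real.exp (τ * E x - τ * E y)) := by
    rw [accept, ← Real.exp_sub]; ring_nf
  have hle (x : α) : τ * E x - τ * E y ≤ 2 * |τ| * B := by
    have hτE (z : α) : |τ * E z| ≤ |τ| * B := by rw [abs_mul]; gcongr; exact hB z
    linarith [le_abs_self (τ * E x), neg_abs_le (τ * E y), hτE x, hτE y]
  rw [hexp, hexp]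
  calc |min 1 (Real.exp (τ * E x₁ - τ * E y)) - min 1 (Real.exp (τ * E x - τ * E y))|
      ≤ |Real.exp (τ * E x₁ - τ * E y) - Real.exp (τ * E x - τ * E y)| := by
        simpa using abs_min_sub_min_le_max 1 (Real.exp (τ * E x₁ - τ * E y)) 1
          (Real.exp (τ * E x - τ * E y))
    _ ≤ Real.exp (2 * |τ| * B) * (|τ| * |E x₁ - E x|) := by
        refine (abs_exp_sub_exp_le (hle x₁) (hle x)).trans_eq ?_
        rw [← abs_mul]; ring_nf
    _ ≤ Real.exp (2 * |τ| * B) * (|τ| * (K * dist x₁ x)) := by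
        gcongr
        simpa [Real.dist_eq] using hE.dist_le_mul x₁ x
    _ = _ := by ring

lemma abs_integral_swapK_sub_le [MeasurableSpace α] {U : α → ℝ} (hU : Measurable U) {M : ℝ}
    (hM : ∀ z, |U z| ≤ M) {LU : ℝ≥0} (hULip : LipschitzWith LU U) {A : ℝ}
    (hA : ∀ y x₁ x, |accept τ E y x₁ - accept τ E y x| ≤ A * dist x₁ x) (y x₁ x : α) :
    |∫ z, U z ∂swapK τ E y x₁ - ∫ z, U z ∂swapK τ E y x| ≤ (2 * M * A + LU) * dist x₁ x := by
  have h₀ := accept_nonneg τ E y x₁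
  have h₁ := accept_le_one τ E y x₁
  have hUyx : |U y - U x| ≤ 2 * M := (abs_sub _ _).trans (by linarith [hM y, hM x])
  have hUx : |U x₁ - U x| ≤ LU * dist x₁ x := by
    simpa [Real.dist_eq] using hULip.dist_le_mul x₁ x
  rw [integral_swapK hU, integral_swapK hU]
  calc _ = |(accept τ E y x₁ - accept τ E y x) * (U y - U x)
          + (1 - accept τ E y x₁) * (U x₁ - U x)| := by ring_nf
    _ ≤ A * dist x₁ x * (2 * M) + 1 * (LU * dist x₁ x) := by
        refine (abs_add_le _ _).trans (add_le_add ?_ ?_) <;> rw [abs_mul]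
        · exact mul_le_mul (hA y x₁ x) hUyx (abs_nonneg _) ((abs_nonneg _).trans (hA y x₁ x))
        · exact mul_le_mul (by rw [abs_of_nonneg (by linarith)]; linarith) hUx (abs_nonneg _)
            zero_le_one
    _ = _ := by ring

end SwapLipschitz

theorem covariance_function_lipschitz_general
    {d : ℕ} (S : Set (EuclideanSpace ℝ (Fin d))) (hS : IsCompact S)
    (E : ↥S → ℝ) (LE : ℝ≥0) (hELip : LipschitzWith LE E) (τ : ℝ)
    (π π' : Measure S) [IsProbabilityMeasure π'] (P0 P : ↥S → Measure S)
    (hP0meas : Measurable P0) (hP0prob : ∀ x, IsProbabilityMeasure (P0 x))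
    (hP0inv : π'.bind P0 = π') (θ : ℝ) (n₀ : ℕ) (hn₀ : 1 ≤ n₀)
    (ε₀ : ℝ) (hε₀ : ε₀ ∈ Set.Ioc (0 : ℝ) 1) (φ₀ : Measure S) [IsProbabilityMeasure φ₀]
    (hmino0 : ∀ x, ∀ A : Set ↥S, MeasurableSet A → ENNReal.ofReal ε₀ * φ₀ A ≤ iterK P0 n₀ x A)
    (hPoisson : ∀ g : ↥S → ℝ, (∃ L : ℝ≥0, LipschitzWith L g) → (∫ x, g x ∂π = 0) →
      ∃ L' : ℝ≥0, LipschitzWith L'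
        (fun x => ∑' j : ℕ, ∫ z, g z ∂(iterK (adaptK θ τ E P π') j x)))
    (f : ↥S → ℝ) (Lf : ℝ≥0) (hfLip : LipschitzWith Lf f) (hfπ : ∫ x, f x ∂π = 0) :
    let U : ↥S → ℝ := fun x => ∑' j : ℕ, ∫ z, f z ∂(iterK (adaptK θ τ E P π') j x)
    let H : ↥S → ↥S → ℝ := fun x y =>
      (∫ z, U z ∂(swapK τ E y x)) - ∫ y', ∫ z, U z ∂(swapK τ E y' x) ∂π'
    let U0 : ↥S → ↥S → ℝ := fun x y => ∑' j : ℕ, ∫ z, H x z ∂(iterK P0 j y)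
    let Γcov : ↥S → ↥S → ℝ := fun x y =>
      ∫ z, (U0 x z * U0 y z - (∫ w, U0 x w ∂(P0 z)) * (∫ w, U0 y w ∂(P0 z))) ∂π'
    ∃ c₀ : ℝ, ∀ x x₁ : ↥S,
      |Γcov x₁ x - Γcov x x| ≤ c₀ * ‖(↑x₁ - ↑x : EuclideanSpace ℝ (Fin d))‖ := by
  intro U H U0 Γcov
  have : CompactSpace S := isCompact_iff_compactSpace.1 hS
  have := hP0prob
  obtain ⟨LU, hULip⟩ := hPoisson f ⟨Lf, hfLip⟩ hfπ
  have hUmeas : Measurable U := hULip.continuous.measurable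
  obtain ⟨MU, hMU⟩ := (isCompact_range hULip.continuous.abs).bddAbove
  obtain ⟨ME, hME⟩ := (isCompact_range hELip.continuous.abs).bddAbove
  obtain ⟨c, hc⟩ := exists_abs_kernelCovariance_centered_poissonSum_sub_le hP0meas hP0inv hn₀ hε₀
    (fun x => Measure.le_iff.2 fun A hA => by simpa using hmino0 x A hA)
    (G := fun x y => ∫ z, U z ∂swapK τ E y x)
    (fun x => measurable_integral_swapK hUmeas hELip.continuous.measurable x)
    (fun x y => abs_integral_swapK_le hUmeas (fun z => hMU ⟨z, rfl⟩) y x)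
    fun x₁ x y => abs_integral_swapK_sub_le hUmeas (fun z => hMU ⟨z, rfl⟩) hULip
      (abs_accept_sub_accept_le hELip fun z => hME ⟨z, rfl⟩) y x₁ x
  -- `Γcov x y` is `kernelCovariance P0 π' (U0 x) (U0 y)` and `U0 x` is `poissonSum P0 (H x)`.
  exact ⟨c, fun x x₁ => (hc x₁ x).trans_eq (by rw [Subtype.dist_eq, dist_eq_norm])⟩

/-- **Lipschitz continuity of the covariance function** (Lemma 4.10). In the compact setting,
under (A1'), the Lipschitz condition on the Poisson solution, with `E` Lipschitz and `f`
Lipschitz with `π(f) = 0`, there is `c₀ < ∞` with `|Γ(x₁, x) − Γ(x, x)| ≤ c₀|x₁ − x|`. -/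
theorem covariance_function_lipschitz
    {d : ℕ} (S : Set (EuclideanSpace ℝ (Fin d))) (hS : IsCompact S) (hSne : S.Nonempty)
    (lam : Measure S) [SigmaFinite lam]
    (E : ↥S → ℝ) (LE : ℝ≥0) (hELip : LipschitzWith LE E)
    (t t' τ : ℝ) (ht : 0 < t) (htt' : t < t') (hτ : τ = 1 / t - 1 / t')
    (π π' : Measure S) [IsProbabilityMeasure π] [IsProbabilityMeasure π']
    (hπ : π = lam.withDensity fun x =>
      ENNReal.ofReal (Real.exp (-E x / t)) / ∫⁻ y, ENNReal.ofReal (Real.exp (-E y / t)) ∂lam)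
    (hπ' : π' = lam.withDensity fun x =>
      ENNReal.ofReal (Real.exp (-E x / t')) / ∫⁻ y, ENNReal.ofReal (Real.exp (-E y / t')) ∂lam)
    (P0 P : ↥S → Measure S)
    (hP0meas : Measurable P0) (hPmeas : Measurable P)
    (hP0prob : ∀ x, IsProbabilityMeasure (P0 x)) (hPprob : ∀ x, IsProbabilityMeasure (P x))
    (hP0inv : π'.bind P0 = π') (hPinv : π.bind P = π)
    (θ : ℝ) (hθ : θ ∈ Set.Ioo (0 : ℝ) 1)
    (n₀ : ℕ) (hn₀ : 1 ≤ n₀)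
    (ε₀ ε₁ : ℝ) (hε₀ : ε₀ ∈ Set.Ioc (0 : ℝ) 1) (hε₁ : ε₁ ∈ Set.Ioc (0 : ℝ) 1)
    (φ₀ φ₁ : Measure S) [IsProbabilityMeasure φ₀] [IsProbabilityMeasure φ₁]
    (hmino0 : ∀ x, ∀ A : Set ↥S, MeasurableSet A → ENNReal.ofReal ε₀ * φ₀ A ≤ iterK P0 n₀ x A)
    (hmino1 : ∀ x, ∀ A : Set ↥S, MeasurableSet A → ENNReal.ofReal ε₁ * φ₁ A ≤ iterK P n₀ x A)
    (hPoisson : ∀ g : ↥S → ℝ, (∃ L : ℝ≥0, LipschitzWith L g) → (∫ x, g x ∂π = 0) →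
      ∃ L' : ℝ≥0, LipschitzWith L'
        (fun x => ∑' j : ℕ, ∫ z, g z ∂(iterK (adaptK θ τ E P π') j x)))
    (f : ↥S → ℝ) (Lf : ℝ≥0) (hfLip : LipschitzWith Lf f) (hfπ : ∫ x, f x ∂π = 0) :
    let U : ↥S → ℝ := fun x => ∑' j : ℕ, ∫ z, f z ∂(iterK (adaptK θ τ E P π') j x)
    let H : ↥S → ↥S → ℝ := fun x y =>
      (∫ z, U z ∂(swapK τ E y x)) - ∫ y', ∫ z, U z ∂(swapK τ E y' x) ∂π'
    let U0 : ↥S → ↥S → ℝ := fun x y => ∑' j : ℕ, ∫ z, H x z ∂(iterK P0 j y)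
    let Γcov : ↥S → ↥S → ℝ := fun x y =>
      ∫ z, (U0 x z * U0 y z - (∫ w, U0 x w ∂(P0 z)) * (∫ w, U0 y w ∂(P0 z))) ∂π'
    ∃ c₀ : ℝ, ∀ x x₁ : ↥S,
      |Γcov x₁ x - Γcov x x| ≤ c₀ * ‖(↑x₁ - ↑x : EuclideanSpace ℝ (Fin d))‖ :=
  covariance_function_lipschitz_general S hS E LE hELip τ π π' P0 P hP0meas hP0prob hP0inv θ n₀ hn₀
    ε₀ hε₀ φ₀ hmino0 hPoisson f Lf hfLip hfπ

end
end

section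
/- Doeblin minorization of the limiting equi-energy kernel (claim of Section 2.3). Suppose θ ∈ (0, 1) and that E is bounded below, so that r_max := sup_x r(x) = e^{−τ inf E} < ∞. Then the limiting kernel K satisfies the whole-space minorization K(x, A) ≥ ε π(A) for all x ∈ X and A ∈ B, with ε := (1 − θ) Z / (Z' r_max) > 0; in particular K is uniformly ergodic, irrespective of the kernel P. -/
open MeasureTheory Filter
open scoped ENNReal NNReal

noncomputable section

variable {𝒳 : Type*} [MeasurableSpace 𝒳]

/-! From any state `x`, the swap move accepts a proposal `y ~ π'` with probability at least
`r(y) / r_max`, and `e^{-E/t'} r = e^{-E/t}`, i.e. `r(y) π'(dy) = (Z / Z') π(dy)`. Hence the swap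
part `(1 - θ) R(x, ·)` of `K` alone dominates `(1 - θ) Z / (Z' r_max) · π`, uniformly in `x`. -/

lemma ofReal_integral_le_lintegral_ofReal {μ : Measure 𝒳} {f : 𝒳 → ℝ} (hf : 0 ≤ᵐ[μ] f) :
    ENNReal.ofReal (∫ x, f x ∂μ) ≤ ∫⁻ x, ENNReal.ofReal (f x) ∂μ := by
  by_cases hfi : Integrable f μ
  · exact (ofReal_integral_eq_lintegral_ofReal hfi hf).le
  · simp [integral_undef hfi]

section NormalizedDensity

variable {μ ν : Measure 𝒳} {f : 𝒳 → ℝ} {Z : ℝ}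

lemma le_smul_withDensity_of_apply_eq (hf : 0 ≤ᵐ[μ] f)
    (hν : ∀ A, MeasurableSet A → ν A = ENNReal.ofReal ((∫ x in A, f x ∂μ) / Z)) :
    ν ≤ ENNReal.ofReal Z⁻¹ • μ.withDensity (fun x => ENNReal.ofReal (f x)) := by
  refine Measure.le_iff.2 fun A hA => ?_
  rw [hν A hA, Measure.smul_apply, withDensity_apply _ hA, smul_eq_mul, div_eq_inv_mul,
    ENNReal.ofReal_mul' (setIntegral_nonneg_of_ae_restrict (ae_restrict_of_ae hf))]
  gcongr
  exact ofReal_integral_le_lintegral_ofReal (ae_restrict_of_ae hf)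

lemma eq_smul_withDensity_of_apply_eq (hfi : Integrable f μ) (hf : 0 ≤ᵐ[μ] f)
    (hν : ∀ A, MeasurableSet A → ν A = ENNReal.ofReal ((∫ x in A, f x ∂μ) / Z)) :
    ν = ENNReal.ofReal Z⁻¹ • μ.withDensity (fun x => ENNReal.ofReal (f x)) := by
  ext A hA
  rw [hν A hA, Measure.smul_apply, withDensity_apply _ hA, smul_eq_mul, div_eq_inv_mul,
    ENNReal.ofReal_mul' (setIntegral_nonneg_of_ae_restrict (ae_restrict_of_ae hf)),
    ofReal_integral_eq_lintegral_ofReal hfi.restrict (ae_restrict_of_ae hf)]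

end NormalizedDensity

lemma exp_neg_div_eq_mul_exp {t t' : ℝ} (ht : t ≠ 0) (ht' : t' ≠ 0) (e : ℝ) :
    Real.exp (-e / t) = Real.exp (-e / t') * Real.exp (-(1 / t - 1 / t') * e) := by
  rw [← Real.exp_add]
  congr 1
  field_simp
  ring

lemma div_le_accept {α : Type*} {τ : ℝ} {E : α → ℝ} {M : ℝ}
    (hM : ∀ z, Real.exp (-τ * E z) ≤ M) (y x : α) :
    Real.exp (-τ * E y) / M ≤ accept τ E y x := by
  have hM0 : 0 < M := (Real.exp_pos _).trans_le (hM y)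
  refine le_min ((div_le_one hM0).2 (hM y)) ?_
  gcongr
  exact hM x

lemma ofReal_exp_div_le_mul_accept {α : Type*} {E : α → ℝ} {t t' τ M : ℝ} (ht : t ≠ 0)
    (ht' : t' ≠ 0) (hτ : τ = 1 / t - 1 / t') (hM : ∀ z, Real.exp (-τ * E z) ≤ M)
    (y x : α) :
    ENNReal.ofReal M⁻¹ * ENNReal.ofReal (Real.exp (-E y / t)) ≤
      ENNReal.ofReal (Real.exp (-E y / t')) * ENNReal.ofReal (accept τ E y x) := by
  rw [← ENNReal.ofReal_mul' (Real.exp_pos _).le, ← ENNReal.ofReal_mul (Real.exp_pos _).le]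
  refine ENNReal.ofReal_le_ofReal ?_
  calc M⁻¹ * Real.exp (-E y / t) = Real.exp (-E y / t') * (Real.exp (-τ * E y) / M) := by
        rw [exp_neg_div_eq_mul_exp ht ht', hτ]; ring
    _ ≤ Real.exp (-E y / t') * accept τ E y x := by
        gcongr
        exact div_le_accept hM y x

section SwapKernel

variable {τ : ℝ} {E : 𝒳 → ℝ}

lemma measurable_accept (hE : Measurable E) (x : 𝒳) : Measurable fun y => accept τ E y x :=
  measurable_const.min ((Real.measurable_exp.comp (hE.const_mul (-τ))).div_const _)

lemma measurable_swapK (hE : Measurable E) (x : 𝒳) : Measurable fun y => swapK τ E y x := by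
  refine Measure.measurable_of_measurable_coe _ fun s hs => ?_
  simp only [swapK, Measure.coe_add, Pi.add_apply, Measure.smul_apply, smul_eq_mul,
    Measure.dirac_apply' _ hs]
  have hacc := measurable_accept (τ := τ) hE x
  exact (hacc.ennreal_ofReal.mul (measurable_one.indicator hs)).add
    ((measurable_const.sub hacc).ennreal_ofReal.mul measurable_const)

lemma withDensity_accept_le_bind_swapK (hE : Measurable E) (μ : Measure 𝒳) (x : 𝒳) :
    μ.withDensity (fun y => ENNReal.ofReal (accept τ E y x)) ≤
      μ.bind fun y => swapK τ E y x := by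
  refine Measure.le_iff.2 fun A hA => ?_
  rw [withDensity_apply _ hA, Measure.bind_apply hA (measurable_swapK hE x).aemeasurable,
    ← lintegral_indicator hA]
  refine lintegral_mono fun y => ?_
  by_cases hy : y ∈ A
  · simp only [Set.indicator_of_mem hy, swapK, Measure.coe_add, Pi.add_apply,
      Measure.smul_apply, smul_eq_mul, Measure.dirac_apply_of_mem hy, mul_one]
    exact le_self_add
  · simp [Set.indicator_of_notMem hy]

lemma smul_bind_swapK_le_adaptK (θ : ℝ) (P : 𝒳 → Measure 𝒳) (μ : Measure 𝒳) (x : 𝒳) :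
    ENNReal.ofReal (1 - θ) • μ.bind (fun y => swapK τ E y x) ≤ adaptK θ τ E P μ x :=
  Measure.le_add_left le_rfl

end SwapKernel

section Boltzmann

variable {lam π π' : Measure 𝒳} {E : 𝒳 → ℝ} {t t' τ Z Z' M : ℝ}

lemma smul_le_withDensity_accept (hE : Measurable E) (ht : t ≠ 0) (ht' : t' ≠ 0)
    (hτ : τ = 1 / t - 1 / t') (hM : ∀ z, Real.exp (-τ * E z) ≤ M) (hZ : 0 < Z) (hZ' : 0 < Z')
    (hπ : π ≤ ENNReal.ofReal Z⁻¹ •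
      lam.withDensity fun y => ENNReal.ofReal (Real.exp (-E y / t)))
    (hπ' : π' = ENNReal.ofReal Z'⁻¹ •
      lam.withDensity fun y => ENNReal.ofReal (Real.exp (-E y / t')))
    (x : 𝒳) :
    ENNReal.ofReal (Z / (Z' * M)) • π ≤
      π'.withDensity fun y => ENNReal.ofReal (accept τ E y x) := by
  have hM0 : 0 < M := (Real.exp_pos _).trans_le (hM x)
  have hdens (s : ℝ) : Measurable fun y => ENNReal.ofReal (Real.exp (-E y / s)) :=
    ENNReal.measurable_ofReal.comp (Real.measurable_exp.comp (hE.neg.div_const _))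
  have hcoef : ENNReal.ofReal (Z / (Z' * M)) * ENNReal.ofReal Z⁻¹ =
      ENNReal.ofReal Z'⁻¹ * ENNReal.ofReal M⁻¹ := by
    rw [← ENNReal.ofReal_mul (by positivity), ← ENNReal.ofReal_mul (by positivity)]
    congr 1
    field_simp
  calc ENNReal.ofReal (Z / (Z' * M)) • π
      ≤ ENNReal.ofReal (Z / (Z' * M)) • ENNReal.ofReal Z⁻¹ •
          lam.withDensity fun y => ENNReal.ofReal (Real.exp (-E y / t)) := by gcongr
    _ = ENNReal.ofReal Z'⁻¹ • lam.withDensity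
          (ENNReal.ofReal M⁻¹ • fun y => ENNReal.ofReal (Real.exp (-E y / t))) := by
        rw [smul_smul, hcoef, mul_smul, withDensity_smul _ (hdens t)]
    _ ≤ ENNReal.ofReal Z'⁻¹ • lam.withDensity
          ((fun y => ENNReal.ofReal (Real.exp (-E y / t'))) *
            fun y => ENNReal.ofReal (accept τ E y x)) := by
        gcongr
        exact withDensity_mono (ae_of_all _ fun y =>
          ofReal_exp_div_le_mul_accept ht ht' hτ hM y x)
    _ = π'.withDensity fun y => ENNReal.ofReal (accept τ E y x) := by
        rw [withDensity_mul _ (hdens t') (measurable_accept hE x).ennreal_ofReal,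
          hπ', withDensity_smul_measure]

end Boltzmann

theorem limiting_kernel_doeblin_minorization_general
    [TopologicalSpace 𝒳] [BorelSpace 𝒳]
    (lam : Measure 𝒳)
    (E : 𝒳 → ℝ) (hEcont : Continuous E) (hEbdd : BddBelow (Set.range E))
    (t t' τ : ℝ) (ht : 0 < t) (htt' : t < t') (hτ : τ = 1 / t - 1 / t')
    (Z Z' : ℝ)
    (hZ'int : Integrable (fun x => Real.exp (-E x / t')) lam)
    (hZpos : 0 < Z) (hZ'pos : 0 < Z')
    (piT piT' : Measure 𝒳)
    (hπ : ∀ A : Set 𝒳, MeasurableSet A →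
      piT A = ENNReal.ofReal ((∫ x in A, Real.exp (-E x / t) ∂lam) / Z))
    (hπ' : ∀ A : Set 𝒳, MeasurableSet A →
      piT' A = ENNReal.ofReal ((∫ x in A, Real.exp (-E x / t') ∂lam) / Z'))
    (P : 𝒳 → Measure 𝒳)
    (θ : ℝ) (hθ : θ ∈ Set.Ioo (0 : ℝ) 1) :
    0 < (1 - θ) * Z / (Z' * Real.exp (-τ * sInf (Set.range E))) ∧
    ∀ x : 𝒳, ∀ A : Set 𝒳, MeasurableSet A →
      ENNReal.ofReal ((1 - θ) * Z / (Z' * Real.exp (-τ * sInf (Set.range E)))) * piT A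
        ≤ adaptK θ τ E P piT' x A := by
  set rmax := Real.exp (-τ * sInf (Set.range E))
  have hθ1 : 0 < 1 - θ := sub_pos.2 hθ.2
  have hτ0 : 0 ≤ τ := by
    rw [hτ, sub_nonneg]
    exact one_div_le_one_div_of_le ht htt'.le
  have hrmax (z : 𝒳) : Real.exp (-τ * E z) ≤ rmax := by
    have hinf := csInf_le hEbdd (Set.mem_range_self z)
    exact Real.exp_le_exp.2 (mul_le_mul_of_nonpos_left hinf (neg_nonpos.2 hτ0))
  refine ⟨by positivity, fun x A _ => ?_⟩
  have hexp_nonneg (s : ℝ) : 0 ≤ᵐ[lam] fun y => Real.exp (-E y / s) :=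
    ae_of_all _ fun _ => (Real.exp_pos _).le
  have hswap := smul_le_withDensity_accept hEcont.measurable ht.ne' (ht.trans htt').ne' hτ hrmax
    hZpos hZ'pos (le_smul_withDensity_of_apply_eq (hexp_nonneg t) hπ)
    (eq_smul_withDensity_of_apply_eq hZ'int (hexp_nonneg t') hπ') x
  have hK : ENNReal.ofReal ((1 - θ) * Z / (Z' * rmax)) • piT ≤ adaptK θ τ E P piT' x :=
    calc ENNReal.ofReal ((1 - θ) * Z / (Z' * rmax)) • piT
        = ENNReal.ofReal (1 - θ) • ENNReal.ofReal (Z / (Z' * rmax)) • piT := by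
          rw [smul_smul, ← ENNReal.ofReal_mul hθ1.le, mul_div_assoc]
      _ ≤ ENNReal.ofReal (1 - θ) • piT'.bind fun y => swapK τ E y x := by
          gcongr
          exact hswap.trans (withDensity_accept_le_bind_swapK hEcont.measurable piT' x)
      _ ≤ adaptK θ τ E P piT' x := smul_bind_swapK_le_adaptK θ P piT' x
  exact hK A

/-- **Doeblin minorization of the limiting equi-energy kernel** (claim of Section 2.3):
if `θ ∈ (0,1)` and `E` is bounded below, so that `r_max = sup_x r(x) = e^{−τ inf E} < ∞`,
then the limiting kernel `K = θP + (1−θ)R` satisfies `K(x, A) ≥ ε π(A)` for all `x, A`,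
with `ε = (1 − θ) Z / (Z' r_max) > 0`; in particular `K` is uniformly ergodic. -/
theorem limiting_kernel_doeblin_minorization
    [TopologicalSpace 𝒳] [PolishSpace 𝒳] [BorelSpace 𝒳] [Nonempty 𝒳]
    (lam : Measure 𝒳) [SigmaFinite lam]
    (E : 𝒳 → ℝ) (hEcont : Continuous E) (hEbdd : BddBelow (Set.range E))
    (t t' τ : ℝ) (ht : 0 < t) (htt' : t < t') (hτ : τ = 1 / t - 1 / t')
    (Z Z' : ℝ)
    (hZ : Z = ∫ x, Real.exp (-E x / t) ∂lam) (hZ' : Z' = ∫ x, Real.exp (-E x / t') ∂lam)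
    (hZint : Integrable (fun x => Real.exp (-E x / t)) lam)
    (hZ'int : Integrable (fun x => Real.exp (-E x / t')) lam)
    (hZpos : 0 < Z) (hZ'pos : 0 < Z')
    (piT piT' : Measure 𝒳) [IsProbabilityMeasure piT] [IsProbabilityMeasure piT']
    (hπ : ∀ A : Set 𝒳, MeasurableSet A →
      piT A = ENNReal.ofReal ((∫ x in A, Real.exp (-E x / t) ∂lam) / Z))
    (hπ' : ∀ A : Set 𝒳, MeasurableSet A →
      piT' A = ENNReal.ofReal ((∫ x in A, Real.exp (-E x / t') ∂lam) / Z'))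
    (P : 𝒳 → Measure 𝒳) (hPmeas : Measurable P) (hPprob : ∀ x, IsProbabilityMeasure (P x))
    (hPinv : piT.bind P = piT)
    (θ : ℝ) (hθ : θ ∈ Set.Ioo (0 : ℝ) 1) :
    0 < (1 - θ) * Z / (Z' * Real.exp (-τ * sInf (Set.range E))) ∧
    ∀ x : 𝒳, ∀ A : Set 𝒳, MeasurableSet A →
      ENNReal.ofReal ((1 - θ) * Z / (Z' * Real.exp (-τ * sInf (Set.range E)))) * piT A
        ≤ adaptK θ τ E P piT' x A :=
  limiting_kernel_doeblin_minorization_general lam E hEcont hEbdd t t' τ ht htt' hτ Z Z' hZ'int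
    hZpos hZ'pos piT piT' hπ hπ' P θ hθ

end
end
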